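/- arXiv:1110.4283 — 9 statements merged into one kernel-verified Lean document; each statement's English description precedes it below -/
import Mathlib

section
/- If the intersection graph of a family of n subcubes of {0,1}^d contains no clique of size r+1, then the number of intersecting pairs of subcubes is at most binom(r,2)·2^d. -/
/-! Charge each intersecting pair `i < j` to the points of `S i ∩ S j`. The sets through a fixed
point `x` pairwise intersect, so without a pairwise intersecting `(r+1)`-subfamily there are at
most `r` of them, and at most `C(r,2)` pairs are charged to `x`. -/

/-- The subcube of `{0,1}^d` represented by `u ∈ {0,1,*}^d` (`none` = `*`). -/
def cubeSet {d : ℕ} (u : Fin d → Option Bool) : Set (Fin d → Bool) :=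
  {x | ∀ i : Fin d, ∀ b : Bool, u i = some b → x i = b}

open Finset

section IntersectingPairs

variable {α ι : Type*} {S : ι → Set α} {r : ℕ}

lemma card_le_of_forall_mem_of_not_exists_pairwise_inter
    (h : ¬ ∃ s : Finset ι, #s = r + 1 ∧ ∀ i ∈ s, ∀ j ∈ s, i ≠ j → (S i ∩ S j).Nonempty)
    {x : α} {T : Finset ι} (hT : ∀ i ∈ T, x ∈ S i) : #T ≤ r := by
  by_contra! hr
  obtain ⟨s, hsT, hs⟩ := exists_subset_card_eq (Nat.succ_le_of_lt hr)
  exact h ⟨s, hs, fun i hi j hj _ => ⟨x, hT i (hsT hi), hT j (hsT hj)⟩⟩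

theorem ncard_pairs_inter_nonempty_le [Fintype α] [Fintype ι] [LinearOrder ι]
    (h : ¬ ∃ s : Finset ι, #s = r + 1 ∧ ∀ i ∈ s, ∀ j ∈ s, i ≠ j → (S i ∩ S j).Nonempty) :
    {p : ι × ι | p.1 < p.2 ∧ (S p.1 ∩ S p.2).Nonempty}.ncard ≤ r.choose 2 * Fintype.card α := by
  classical
  let T (x : α) : Finset ι := {i | x ∈ S i}
  have hpairs : {p : ι × ι | p.1 < p.2 ∧ (S p.1 ∩ S p.2).Nonempty} =
      ↑(univ.biUnion fun x => {p ∈ T x ×ˢ T x | p.1 < p.2}) := by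
    ext p
    simp [T, Set.Nonempty, and_comm]
  rw [hpairs, Set.ncard_coe_finset]
  calc #(univ.biUnion fun x => {p ∈ T x ×ˢ T x | p.1 < p.2})
      ≤ ∑ x, #{p ∈ T x ×ˢ T x | p.1 < p.2} := card_biUnion_le
    _ = ∑ x, (#(T x)).choose 2 := by simp only [card_product_filter_lt]
    _ ≤ ∑ _x : α, r.choose 2 := sum_le_sum fun x _ => Nat.choose_le_choose 2 <|
        card_le_of_forall_mem_of_not_exists_pairwise_inter h fun i hi => (mem_filter.1 hi).2
    _ = r.choose 2 * Fintype.card α := by rw [sum_const, card_univ, smul_eq_mul, mul_comm]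

end IntersectingPairs

/-- If the intersection graph of a family of `n` subcubes of `{0,1}^d` has no clique
of size `r+1`, then the number of intersecting pairs is at most `C(r,2) * 2^d`. -/
theorem subcubes_Kr1_free_edge_bound {d n r : ℕ} (A : Fin n → (Fin d → Option Bool))
    (h : ¬ ∃ s : Finset (Fin n), s.card = r + 1 ∧
      ∀ i ∈ s, ∀ j ∈ s, i ≠ j → (cubeSet (A i) ∩ cubeSet (A j)).Nonempty) :
    {p : Fin n × Fin n | p.1 < p.2 ∧
        (cubeSet (A p.1) ∩ cubeSet (A p.2)).Nonempty}.ncard ≤ Nat.choose r 2 * 2 ^ d := by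
  simpa using ncard_pairs_inter_nonempty_le (S := fun i => cubeSet (A i)) h
end

section
/- Let P_1, ..., P_r be pairwise disjoint t-subsets of {1,...,d} with t = ⌊d/r⌋, and let V be the family of all u ∈ {0,1,*}^d with F(u) = {1,...,d} \ P_i for some i. Then any two intersecting subcubes in V intersect in exactly one point of {0,1}^d, every point of {0,1}^d is contained in exactly r subcubes of V, and the intersection graph of V has exactly binom(r,2)·2^d edges. -/
/-- The fixed set `F(u)` of a subcube vector. -/
def fixedSet {d : ℕ} (u : Fin d → Option Bool) : Finset (Fin d) :=
  Finset.univ.filter (fun i => u i ≠ none)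

open Finset Function

variable {d : ℕ}

def subcubeThrough (S : Finset (Fin d)) (x : Fin d → Bool) : Fin d → Option Bool :=
  fun k => if k ∈ S then none else some (x k)

lemma fixedSet_subcubeThrough (S : Finset (Fin d)) (x : Fin d → Bool) :
    fixedSet (subcubeThrough S x) = univ \ S := by
  ext k
  by_cases h : k ∈ S <;> simp [fixedSet, subcubeThrough, h]

lemma mem_cubeSet_subcubeThrough (S : Finset (Fin d)) (x : Fin d → Bool) :
    x ∈ cubeSet (subcubeThrough S x) := by
  intro k b h
  by_cases hk : k ∈ S <;> simp_all [subcubeThrough]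

lemma eq_subcubeThrough_of_mem {S : Finset (Fin d)} {u : Fin d → Option Bool}
    {x : Fin d → Bool} (hu : fixedSet u = univ \ S) (hx : x ∈ cubeSet u) :
    u = subcubeThrough S x := by
  funext k
  have hk : u k ≠ none ↔ k ∉ S := by
    simpa [fixedSet] using congrArg (k ∈ ·) hu
  by_cases h : k ∈ S
  · simpa [subcubeThrough, h] using hk
  · obtain ⟨b, hb⟩ := Option.ne_none_iff_exists'.mp (hk.mpr h)
    simp [subcubeThrough, h, hb, hx k b hb]

lemma subcubeThrough_eq_imp_eq {S S' : Finset (Fin d)} {x x' : Fin d → Bool}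
    (h : subcubeThrough S x = subcubeThrough S' x') : S = S' := by
  have := congrArg fixedSet h
  simp only [fixedSet_subcubeThrough, ← compl_eq_univ_sdiff] at this
  exact compl_injective this

lemma apply_eq_of_mem_fixedSet {u : Fin d → Option Bool} {x y : Fin d → Bool} {k : Fin d}
    (hk : k ∈ fixedSet u) (hx : x ∈ cubeSet u) (hy : y ∈ cubeSet u) : x k = y k := by
  obtain ⟨b, hb⟩ := Option.ne_none_iff_exists'.mp (mem_filter.mp hk).2
  rw [hx k b hb, hy k b hb]

lemma cubeSet_inter_subsingleton {u v : Fin d → Option Bool}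
    (h : fixedSet u ∪ fixedSet v = univ) : (cubeSet u ∩ cubeSet v).Subsingleton := by
  rintro x ⟨hxu, hxv⟩ y ⟨hyu, hyv⟩
  funext k
  rcases mem_union.mp (h ▸ mem_univ k) with hk | hk
  · exact apply_eq_of_mem_fixedSet hk hxu hyu
  · exact apply_eq_of_mem_fixedSet hk hxv hyv

lemma cubeSet_inter_subsingleton_of_disjoint {S S' : Finset (Fin d)} (h : Disjoint S S')
    (x x' : Fin d → Bool) :
    (cubeSet (subcubeThrough S x) ∩ cubeSet (subcubeThrough S' x')).Subsingleton :=
  cubeSet_inter_subsingleton <| by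
    rw [fixedSet_subcubeThrough, fixedSet_subcubeThrough, ← sdiff_inter_distrib_right,
      disjoint_iff_inter_eq_empty.mp h, sdiff_empty]

section ComplementFamily

variable {ι : Type*} (P : ι → Finset (Fin d))

def complementFamily : Set (Fin d → Option Bool) :=
  {u | ∃ i, fixedSet u = univ \ P i}

def subcubePairThrough (q : (ι × ι) × (Fin d → Bool)) :
    (Fin d → Option Bool) × (Fin d → Option Bool) :=
  (subcubeThrough (P q.1.1) q.2, subcubeThrough (P q.1.2) q.2)

variable {P}

lemma mem_complementFamily_and_mem_cubeSet_iff {u : Fin d → Option Bool} {x : Fin d → Bool} :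
    u ∈ complementFamily P ∧ x ∈ cubeSet u ↔ ∃ i, subcubeThrough (P i) x = u := by
  constructor
  · rintro ⟨⟨i, hi⟩, hx⟩
    exact ⟨i, (eq_subcubeThrough_of_mem hi hx).symm⟩
  · rintro ⟨i, rfl⟩
    exact ⟨⟨i, fixedSet_subcubeThrough _ _⟩, mem_cubeSet_subcubeThrough _ _⟩

lemma existsUnique_mem_inter_of_pairwise_disjoint (hdisj : Pairwise (Disjoint on P))
    {u v : Fin d → Option Bool} (hu : u ∈ complementFamily P) (hv : v ∈ complementFamily P)
    (huv : u ≠ v) (hne : (cubeSet u ∩ cubeSet v).Nonempty) :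
    ∃! x : Fin d → Bool, x ∈ cubeSet u ∩ cubeSet v := by
  obtain ⟨x, hxu, hxv⟩ := hne
  obtain ⟨i, rfl⟩ := mem_complementFamily_and_mem_cubeSet_iff.mp ⟨hu, hxu⟩
  obtain ⟨j, rfl⟩ := mem_complementFamily_and_mem_cubeSet_iff.mp ⟨hv, hxv⟩
  have hij : i ≠ j := by rintro rfl; exact huv rfl
  exact ⟨x, ⟨hxu, hxv⟩, fun y hy =>
    cubeSet_inter_subsingleton_of_disjoint (hdisj hij) x x hy ⟨hxu, hxv⟩⟩

lemma ncard_complementFamily_through [Finite ι] (hP : Injective P)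
    (x : Fin d → Bool) : {u ∈ complementFamily P | x ∈ cubeSet u}.ncard = Nat.card ι := by
  have hrange : {u ∈ complementFamily P | x ∈ cubeSet u} =
      Set.range fun i => subcubeThrough (P i) x := by
    ext u
    exact mem_complementFamily_and_mem_cubeSet_iff
  rw [hrange, ← Set.image_univ, Set.ncard_image_of_injective _
    fun i j h => hP (subcubeThrough_eq_imp_eq h), Set.ncard_univ]

lemma two_mul_choose_two (n : ℕ) : 2 * n.choose 2 = n * n - n := by
  rw [Nat.choose_two_right, Nat.mul_div_cancel' (Nat.even_mul_pred_self n).two_dvd,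
    Nat.mul_sub_one]

lemma injOn_subcubePairThrough [Fintype ι] [DecidableEq ι] (hP : Injective P)
    (hdisj : Pairwise (Disjoint on P)) :
    Set.InjOn (subcubePairThrough P)
      ↑((univ : Finset ι).offDiag ×ˢ (univ : Finset (Fin d → Bool))) := by
  rintro ⟨⟨i, j⟩, x⟩ hq ⟨⟨i', j'⟩, x'⟩ - h
  obtain ⟨h₁, h₂⟩ := Prod.mk.inj h
  obtain rfl := hP (subcubeThrough_eq_imp_eq h₁)
  obtain rfl := hP (subcubeThrough_eq_imp_eq h₂)
  have hij : i ≠ j := by simpa using hq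
  have hx' : x' ∈ cubeSet (subcubeThrough (P i) x) ∩ cubeSet (subcubeThrough (P j) x) := by
    rw [h₁, h₂]
    exact ⟨mem_cubeSet_subcubeThrough _ _, mem_cubeSet_subcubeThrough _ _⟩
  rw [cubeSet_inter_subsingleton_of_disjoint (hdisj hij) x x
    ⟨mem_cubeSet_subcubeThrough _ _, mem_cubeSet_subcubeThrough _ _⟩ hx']

lemma intersecting_pairs_eq_image [Fintype ι] [DecidableEq ι] (hP : Injective P) :
    {p : (Fin d → Option Bool) × (Fin d → Option Bool) |
        p.1 ∈ complementFamily P ∧ p.2 ∈ complementFamily P ∧ p.1 ≠ p.2 ∧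
          (cubeSet p.1 ∩ cubeSet p.2).Nonempty} =
      ↑(((univ : Finset ι).offDiag ×ˢ (univ : Finset (Fin d → Bool))).image
        (subcubePairThrough P)) := by
  ext ⟨u, v⟩
  simp only [Set.mem_ofPred_eq, coe_image, Set.mem_image, mem_coe, mem_product, mem_offDiag,
    mem_univ, true_and, and_true, Prod.exists, subcubePairThrough, Prod.mk.injEq]
  constructor
  · rintro ⟨hu, hv, huv, x, hxu, hxv⟩
    obtain ⟨i, rfl⟩ := mem_complementFamily_and_mem_cubeSet_iff.mp ⟨hu, hxu⟩
    obtain ⟨j, rfl⟩ := mem_complementFamily_and_mem_cubeSet_iff.mp ⟨hv, hxv⟩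
    exact ⟨i, j, x, by rintro rfl; exact huv rfl, rfl, rfl⟩
  · rintro ⟨i, j, x, hij, rfl, rfl⟩
    obtain ⟨hu, hxu⟩ := mem_complementFamily_and_mem_cubeSet_iff.mpr ⟨i, rfl⟩
    obtain ⟨hv, hxv⟩ := mem_complementFamily_and_mem_cubeSet_iff.mpr ⟨j, rfl⟩
    exact ⟨hu, hv, fun h => hij (hP (subcubeThrough_eq_imp_eq h)), x, hxu, hxv⟩

lemma ncard_intersecting_pairs [Fintype ι] [DecidableEq ι] (hP : Injective P)
    (hdisj : Pairwise (Disjoint on P)) :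
    {p : (Fin d → Option Bool) × (Fin d → Option Bool) |
        p.1 ∈ complementFamily P ∧ p.2 ∈ complementFamily P ∧ p.1 ≠ p.2 ∧
          (cubeSet p.1 ∩ cubeSet p.2).Nonempty}.ncard
      = 2 * ((Fintype.card ι).choose 2 * 2 ^ d) := by
  rw [intersecting_pairs_eq_image hP, Set.ncard_coe_finset,
    card_image_of_injOn (injOn_subcubePairThrough hP hdisj), card_product, offDiag_card,
    card_univ, card_univ, Fintype.card_fun, Fintype.card_bool, Fintype.card_fin,
    ← mul_assoc, two_mul_choose_two]

end ComplementFamily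

/-- For pairwise disjoint `t`-sets `P₁,…,P_r` (`t = ⌊d/r⌋`, `r ≤ d`), the family `V`
of all subcubes with fixed set `[d] \ P i` for some `i` satisfies: intersecting distinct
subcubes meet in exactly one point, every point of `{0,1}^d` lies in exactly `r`
members of `V`, and the intersection graph of `V` has exactly `C(r,2)·2^d` edges
(i.e. `2·C(r,2)·2^d` ordered intersecting pairs). -/
theorem codim_complement_construction {d r t : ℕ}
    (hr : 1 ≤ r) (hrd : r ≤ d) (ht : t = d / r)
    (P : Fin r → Finset (Fin d))
    (hdisj : ∀ i j : Fin r, i ≠ j → Disjoint (P i) (P j))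
    (hcard : ∀ i, (P i).card = t)
    (V : Set (Fin d → Option Bool))
    (hV : V = {u | ∃ i : Fin r, fixedSet u = Finset.univ \ P i}) :
    (∀ u ∈ V, ∀ v ∈ V, u ≠ v → (cubeSet u ∩ cubeSet v).Nonempty →
        ∃! x : Fin d → Bool, x ∈ cubeSet u ∩ cubeSet v) ∧
    (∀ x : Fin d → Bool, {u ∈ V | x ∈ cubeSet u}.ncard = r) ∧
    {p : (Fin d → Option Bool) × (Fin d → Option Bool) |
        p.1 ∈ V ∧ p.2 ∈ V ∧ p.1 ≠ p.2 ∧ (cubeSet p.1 ∩ cubeSet p.2).Nonempty}.ncard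
      = 2 * (Nat.choose r 2 * 2 ^ d) := by
  have hnonempty : ∀ i, (P i).Nonempty := fun i => by
    rw [← card_pos, hcard i, ht]
    exact Nat.div_pos hrd hr
  have hP : Injective P := pairwise_ne_iff_injective.mp fun i j hij hPij =>
    (hnonempty i).ne_empty (disjoint_self.mp (hPij ▸ hdisj i j hij))
  obtain rfl : V = complementFamily P := hV
  refine ⟨fun u hu v hv => existsUnique_mem_inter_of_pairwise_disjoint hdisj hu hv,
    fun x => ?_, ?_⟩
  · simpa using ncard_complementFamily_through hP x
  · simpa using ncard_intersecting_pairs hP hdisj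
end

section
/- Suppose n < n' ≤ r·2^d and G is the intersection graph of a multiset of n subcubes of {0,1}^d in which no point of {0,1}^d lies in more than r subcubes. Then there is a multiset of n' subcubes of {0,1}^d, in which no point lies in more than r subcubes, whose intersection graph has at least as many edges as G. -/
open Function

section IntersectingPairs

variable {α ι κ : Type*}

def intersectingPairs (S : ι → Set α) : Set (ι × ι) :=
  {p | p.1 ≠ p.2 ∧ (S p.1 ∩ S p.2).Nonempty}

theorem ncard_setOf_mem_le_of_refines [Finite ι] {A : ι → Set α} {B : κ → Set α} (f : κ → ι)
    (hsub : ∀ j, B j ⊆ A (f j))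
    (hdisj : ∀ j₁ j₂, j₁ ≠ j₂ → f j₁ = f j₂ → Disjoint (B j₁) (B j₂)) (x : α) :
    {j | x ∈ B j}.ncard ≤ {i | x ∈ A i}.ncard :=
  Set.ncard_le_ncard_of_injOn f (fun j hj => hsub j hj) fun j₁ hj₁ j₂ hj₂ h => by
    by_contra hne
    exact (hdisj j₁ j₂ hne h).ne_of_mem hj₁ hj₂ rfl

theorem ncard_intersectingPairs_le [Finite κ] {A : ι → Set α} {B : κ → Set α}
    (g : α → ι → κ) (hmem : ∀ x i, x ∈ A i → x ∈ B (g x i))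
    (hg : ∀ x y i j, g x i = g y j → i = j) :
    (intersectingPairs A).ncard ≤ (intersectingPairs B).ncard := by
  obtain h | ⟨p, hp⟩ := (intersectingPairs A).eq_empty_or_nonempty
  · simp [h]
  have : Nonempty α := ⟨hp.2.some⟩
  choose! w hw using fun p (hp : p ∈ intersectingPairs A) => hp.2
  refine Set.ncard_le_ncard_of_injOn (fun p => (g (w p) p.1, g (w p) p.2)) ?_ ?_
  · intro p hp
    refine ⟨fun h => hp.1 (hg _ _ _ _ h), w p, hmem _ _ (hw p hp).1, hmem _ _ (hw p hp).2⟩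
  · intro p _ q _ h
    simp only [Prod.mk.injEq] at h
    exact Prod.ext (hg _ _ _ _ h.1) (hg _ _ _ _ h.2)

end IntersectingPairs

section FinFamily

variable {α : Type*} {n : ℕ}

def splitAt (S : Fin n → Set α) (i : Fin n) (T : Set α) : Fin (n + 1) → Set α :=
  Fin.snoc (update S i (S i ∩ T)) (S i ∩ Tᶜ)

theorem ncard_setOf_mem_splitAt_le (S : Fin n → Set α) (i : Fin n) (T : Set α) (x : α) :
    {j | x ∈ splitAt S i T j}.ncard ≤ {j | x ∈ S j}.ncard := by
  refine ncard_setOf_mem_le_of_refines (Fin.snoc id i) (fun j => ?_) (fun j₁ j₂ hne h => ?_) x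
  · cases j using Fin.lastCases with
    | last => simp [splitAt]
    | cast j =>
      by_cases hj : j = i
      · subst hj; simp [splitAt]
      · simp [splitAt, hj]
  · cases j₁ using Fin.lastCases <;> cases j₂ using Fin.lastCases <;>
      simp only [Fin.snoc_last, Fin.snoc_castSucc, id] at h hne
    · exact absurd rfl hne
    · subst h
      simp only [splitAt, Fin.snoc_last, Fin.snoc_castSucc, update_self]
      exact disjoint_compl_left.mono Set.inter_subset_right Set.inter_subset_right
    · subst h
      simp only [splitAt, Fin.snoc_last, Fin.snoc_castSucc, update_self]
      exact disjoint_compl_right.mono Set.inter_subset_right Set.inter_subset_right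
    · exact absurd (congrArg _ h) hne

theorem ncard_intersectingPairs_le_splitAt (S : Fin n → Set α) (i : Fin n) (T : Set α) :
    (intersectingPairs S).ncard ≤ (intersectingPairs (splitAt S i T)).ncard := by
  classical
  set g : α → Fin n → Fin (n + 1) := fun x j => if j = i ∧ x ∉ T then Fin.last n else j.castSucc
  have hg : ∀ x j, (Fin.snoc id i : Fin (n + 1) → Fin n) (g x j) = j := by
    intro x j
    by_cases h : j = i ∧ x ∉ T <;> simp [g, h]
  refine ncard_intersectingPairs_le g (fun x j hx => ?_) fun x y j j' h => by
    rw [← hg x j, ← hg y j', h]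
  by_cases hj : j = i
  · subst hj
    by_cases hxT : x ∈ T <;> simp [g, splitAt, hx, hxT]
  · simp [g, splitAt, hj, hx]

theorem ncard_setOf_mem_snoc (S : Fin n → Set α) (P : Set α) (x : α) [Decidable (x ∈ P)] :
    {j | x ∈ (Fin.snoc S P : Fin (n + 1) → Set α) j}.ncard =
      {j | x ∈ S j}.ncard + if x ∈ P then 1 else 0 := by
  classical
  simp only [Set.ncard_eq_toFinset_card', Set.toFinset_ofPred, Finset.card_filter,
    Fin.sum_univ_castSucc, Fin.snoc_castSucc, Fin.snoc_last]

theorem ncard_intersectingPairs_le_snoc (S : Fin n → Set α) (P : Set α) :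
    (intersectingPairs S).ncard ≤ (intersectingPairs (Fin.snoc S P : Fin (n + 1) → Set α)).ncard :=
  ncard_intersectingPairs_le (fun _ => Fin.castSucc) (fun x j hx => by simpa using hx)
    fun _ _ _ _ h => Fin.castSucc_injective n h

end FinFamily

section Subcube

variable {d n r : ℕ}

theorem cubeSet_update_some {u : Fin d → Option Bool} {k : Fin d} (hk : u k = none) (b : Bool) :
    cubeSet (update u k (some b)) = cubeSet u ∩ {x | x k = b} := by
  ext x
  constructor
  · intro hx
    refine ⟨fun i b' hi => ?_, hx k b (by simp)⟩
    have hik : i ≠ k := by rintro rfl; simp [hk] at hi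
    exact hx i b' (by rwa [update_of_ne hik])
  · rintro ⟨hx, hxk⟩ i b' hi
    by_cases hik : i = k
    · subst hik
      simp_all
    · exact hx i b' (by rwa [update_of_ne hik] at hi)

theorem cubeSet_some (y : Fin d → Bool) : cubeSet (fun k => some (y k)) = {y} := by
  ext x
  simp [cubeSet, funext_iff]

theorem exists_splitAt_subcube_family (A : Fin n → Fin d → Option Bool) {i : Fin n} {k : Fin d}
    (hk : A i k = none) (hA : ∀ x, {j | x ∈ cubeSet (A j)}.ncard ≤ r) :
    ∃ B : Fin (n + 1) → Fin d → Option Bool,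
      (∀ x, {j | x ∈ cubeSet (B j)}.ncard ≤ r) ∧
      (intersectingPairs (cubeSet ∘ A)).ncard ≤ (intersectingPairs (cubeSet ∘ B)).ncard := by
  set B : Fin (n + 1) → Fin d → Option Bool :=
    Fin.snoc (update A i (update (A i) k (some true))) (update (A i) k (some false))
  have hB : cubeSet ∘ B = splitAt (cubeSet ∘ A) i {x | x k = true} := by
    rw [Fin.comp_snoc, comp_update, cubeSet_update_some hk, cubeSet_update_some hk, splitAt]
    congr 2
    ext x
    simp
  refine ⟨B, fun x => ?_, hB ▸ ncard_intersectingPairs_le_splitAt _ _ _⟩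
  have := ncard_setOf_mem_splitAt_le (cubeSet ∘ A) i {x | x k = true} x
  rw [← hB] at this
  exact this.trans (hA x)

theorem exists_snoc_subcube_family (A : Fin n → Fin d → Option Bool) {y : Fin d → Bool}
    (hA : ∀ x, {j | x ∈ cubeSet (A j)}.ncard ≤ r) (hy : {j | y ∈ cubeSet (A j)}.ncard < r) :
    ∃ B : Fin (n + 1) → Fin d → Option Bool,
      (∀ x, {j | x ∈ cubeSet (B j)}.ncard ≤ r) ∧
      (intersectingPairs (cubeSet ∘ A)).ncard ≤ (intersectingPairs (cubeSet ∘ B)).ncard := by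
  classical
  set B : Fin (n + 1) → Fin d → Option Bool := Fin.snoc A fun k => some (y k)
  have hB : cubeSet ∘ B = Fin.snoc (cubeSet ∘ A) {y} := by
    rw [Fin.comp_snoc, cubeSet_some]
  refine ⟨B, fun x => ?_, hB ▸ ncard_intersectingPairs_le_snoc _ _⟩
  have := ncard_setOf_mem_snoc (cubeSet ∘ A) {y} x
  rw [← hB] at this
  simp only [comp_apply] at this
  rw [this]
  split_ifs with hx
  · rw [Set.mem_singleton_iff.mp hx]; exact hy
  · exact hA x

theorem exists_ncard_setOf_mem_cubeSet_lt (hn : n < r * 2 ^ d) (A : Fin n → Fin d → Option Bool)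
    (hA : ∀ i k, A i k ≠ none) : ∃ y, {j | y ∈ cubeSet (A j)}.ncard < r := by
  classical
  choose p hp using fun i k => Option.ne_none_iff_exists'.mp (hA i k)
  obtain ⟨y, hy⟩ := Fintype.exists_card_fiber_lt_of_card_lt_mul (f := p) (n := r)
    (by simpa [mul_comm] using hn)
  have hfiber : {j | y ∈ cubeSet (A j)} = ↑(Finset.univ.filter fun j => p j = y) := by
    ext j
    simp [show A j = fun k => some (p j k) from funext (hp j), cubeSet_some, eq_comm]
  exact ⟨y, by rwa [hfiber, Set.ncard_coe_finset]⟩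

theorem exists_succ_subcube_family (hn : n < r * 2 ^ d) (A : Fin n → Fin d → Option Bool)
    (hA : ∀ x, {j | x ∈ cubeSet (A j)}.ncard ≤ r) :
    ∃ B : Fin (n + 1) → Fin d → Option Bool,
      (∀ x, {j | x ∈ cubeSet (B j)}.ncard ≤ r) ∧
      (intersectingPairs (cubeSet ∘ A)).ncard ≤ (intersectingPairs (cubeSet ∘ B)).ncard := by
  by_cases hfree : ∃ i k, A i k = none
  · obtain ⟨i, k, hk⟩ := hfree
    exact exists_splitAt_subcube_family A hk hA
  · obtain ⟨y, hy⟩ := exists_ncard_setOf_mem_cubeSet_lt hn A fun i k hk => hfree ⟨i, k, hk⟩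
    exact exists_snoc_subcube_family A hA hy

end Subcube

/-- If `n < n' ≤ r·2^d` and a family of `n` subcubes covers no point more than `r`
times, then there is a family of `n'` subcubes covering no point more than `r` times
whose intersection graph has at least as many edges. -/
theorem extend_subcube_family {d r n n' : ℕ} (h1 : n < n') (h2 : n' ≤ r * 2 ^ d)
    (A : Fin n → (Fin d → Option Bool))
    (hA : ∀ x : Fin d → Bool, {i : Fin n | x ∈ cubeSet (A i)}.ncard ≤ r) :
    ∃ B : Fin n' → (Fin d → Option Bool),
      (∀ x : Fin d → Bool, {i : Fin n' | x ∈ cubeSet (B i)}.ncard ≤ r) ∧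
      {p : Fin n × Fin n | p.1 ≠ p.2 ∧
          (cubeSet (A p.1) ∩ cubeSet (A p.2)).Nonempty}.ncard ≤
        {p : Fin n' × Fin n' | p.1 ≠ p.2 ∧
          (cubeSet (B p.1) ∩ cubeSet (B p.2)).Nonempty}.ncard := by
  induction n', h1 using Nat.le_induction with
  | base => exact exists_succ_subcube_family (by omega) A hA
  | succ m hm ih =>
    obtain ⟨B, hB, hAB⟩ := ih (by omega)
    obtain ⟨C, hC, hBC⟩ := exists_succ_subcube_family (by omega) B hB
    exact ⟨C, hC, hAB.trans hBC⟩
end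

section
/- Let A_1, ..., A_n be subsets of an m-element set X whose intersection graph contains no clique of size r+1. Then n ≤ r·m (assuming each A_i is nonempty), and the number of intersecting pairs is at most both the Turán number t_r(n) and binom(r,2)·m. -/
/-!
The sets containing a given point pairwise intersect, so they form a clique of the intersection
graph and there are at most `r` of them. Double counting incidences, where every `A i` contributes
at least one, gives `n ≤ r m`; every intersecting pair lies among the sets through one of its
common points, which gives at most `C(r, 2)` pairs per point. The Turán bound is Turán's theorem
for the `K_{r+1}`-free intersection graph, whose edges are the intersecting pairs `i < j`.
-/

open Finset

namespace SimpleGraph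

variable {V : Type*} {G : SimpleGraph V} {r : ℕ}

theorem IsClique.card_le_of_cliqueFree {s : Finset V} (hs : G.IsClique (s : Set V))
    (hG : G.CliqueFree (r + 1)) : #s ≤ r := by
  by_contra! hr
  obtain ⟨t, hts, ht⟩ := exists_subset_card_eq hr
  exact hG t ⟨hs.subset (by simpa using hts), ht⟩

theorem CliqueFree.card_edgeFinset_le_card_edgeFinset_turanGraph [Fintype V]
    [DecidableRel G.Adj] {n : ℕ} (hn : Fintype.card V = n) (hG : G.CliqueFree (r + 1)) :
    #G.edgeFinset ≤ #(turanGraph n r).edgeFinset := by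
  rw [card_edgeFinset_turanGraph, ← hn]
  exact hG.card_edgeFinset_le

theorem ncard_setOf_lt_adj [LinearOrder V] (G : SimpleGraph V) :
    {p : V × V | p.1 < p.2 ∧ G.Adj p.1 p.2}.ncard = G.edgeSet.ncard := by
  have hinj : Set.InjOn (fun p : V × V => s(p.1, p.2)) {p | p.1 < p.2 ∧ G.Adj p.1 p.2} := by
    rintro ⟨a, b⟩ ⟨hab, -⟩ ⟨c, d⟩ ⟨hcd, -⟩ h
    rcases Sym2.eq_iff.1 h with ⟨rfl, rfl⟩ | ⟨rfl, rfl⟩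
    · rfl
    · exact absurd hab (lt_asymm hcd)
  rw [← hinj.ncard_image]
  congr 1
  ext e
  induction e with
  | _ a b =>
    simp only [Set.mem_image, Set.mem_ofPred_eq, mem_edgeSet, Prod.exists]
    constructor
    · rintro ⟨c, d, ⟨-, hcd⟩, h⟩
      rwa [← mem_edgeSet, h] at hcd
    · intro hab
      rcases lt_or_gt_of_ne hab.ne with h | h
      · exact ⟨a, b, ⟨h, hab⟩, rfl⟩
      · exact ⟨b, a, ⟨h, hab.symm⟩, Sym2.eq_swap⟩

def intersectionGraph {ι X : Type*} (A : ι → Set X) : SimpleGraph ι where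
  Adj i j := i ≠ j ∧ (A i ∩ A j).Nonempty
  symm := ⟨fun _ _ h => ⟨h.1.symm, Set.inter_comm (A _) _ ▸ h.2⟩⟩
  loopless := ⟨fun _ h => h.1 rfl⟩

variable {ι X : Type*} {A : ι → Set X}

@[simp]
theorem intersectionGraph_adj {i j : ι} :
    (intersectionGraph A).Adj i j ↔ i ≠ j ∧ (A i ∩ A j).Nonempty :=
  Iff.rfl

theorem cliqueFree_intersectionGraph_iff {n : ℕ} : (intersectionGraph A).CliqueFree n ↔
    ¬ ∃ s : Finset ι, #s = n ∧ ∀ i ∈ s, ∀ j ∈ s, i ≠ j → (A i ∩ A j).Nonempty := by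
  simp only [CliqueFree, isNClique_iff, IsClique, Set.Pairwise, mem_coe, intersectionGraph_adj,
    not_exists, not_and]
  exact ⟨fun h t ht hc => h t (fun i hi j hj hij => ⟨hij, hc i hi j hj hij⟩) ht,
    fun h t hc ht => h t ht fun i hi j hj hij => (hc hi hj hij).2⟩

theorem isClique_intersectionGraph_setOf_mem (x : X) :
    (intersectionGraph A).IsClique {i | x ∈ A i} :=
  fun _ hi _ hj hij => ⟨hij, x, hi, hj⟩

namespace intersectionGraph

variable [Fintype ι] [∀ i x, Decidable (x ∈ A i)]

theorem card_filter_mem_le (hA : (intersectionGraph A).CliqueFree (r + 1)) (x : X) :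
    #{i | x ∈ A i} ≤ r :=
  IsClique.card_le_of_cliqueFree (by simpa using isClique_intersectionGraph_setOf_mem x) hA

theorem card_le_mul_card [Fintype X] (hne : ∀ i, (A i).Nonempty)
    (hA : (intersectionGraph A).CliqueFree (r + 1)) :
    Fintype.card ι ≤ r * Fintype.card X :=
  calc Fintype.card ι = ∑ _ : ι, 1 := by simp
    _ ≤ ∑ i, #{x | x ∈ A i} := by
      gcongr with i
      obtain ⟨x, hx⟩ := hne i
      exact card_pos.2 ⟨x, by simpa using hx⟩
    _ = ∑ x, #{i | x ∈ A i} := sum_card_bipartiteAbove_eq_sum_card_bipartiteBelow _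
    _ ≤ ∑ _ : X, r := sum_le_sum fun x _ => card_filter_mem_le hA x
    _ = r * Fintype.card X := by simp [mul_comm]

theorem card_edgeFinset_le_choose_mul_card [Fintype X] [DecidableEq ι]
    [DecidableRel (intersectionGraph A).Adj] (hA : (intersectionGraph A).CliqueFree (r + 1)) :
    #(intersectionGraph A).edgeFinset ≤ r.choose 2 * Fintype.card X := by
  have hcover : (intersectionGraph A).edgeFinset ⊆
      univ.biUnion fun x => ({i | x ∈ A i} : Finset ι).offDiag.image Sym2.mk.uncurry := by
    intro e he
    induction e with
    | _ i j =>
      obtain ⟨hij, x, hi, hj⟩ := mem_edgeFinset.1 he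
      exact mem_biUnion.2 ⟨x, mem_univ _, mem_image.2 ⟨(i, j), by simp [hi, hj, hij], rfl⟩⟩
  calc #(intersectionGraph A).edgeFinset
      ≤ ∑ x, #(({i | x ∈ A i} : Finset ι).offDiag.image Sym2.mk.uncurry) :=
        (card_le_card hcover).trans card_biUnion_le
    _ = ∑ x, (#{i | x ∈ A i}).choose 2 := by simp only [Sym2.card_image_offDiag]
    _ ≤ ∑ _ : X, r.choose 2 :=
        sum_le_sum fun x _ => Nat.choose_le_choose 2 (card_filter_mem_le hA x)
    _ = r.choose 2 * Fintype.card X := by simp [mul_comm]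

end intersectionGraph

end SimpleGraph

open SimpleGraph

/-- If `A₁,…,A_n` are nonempty subsets of an `m`-set whose intersection graph has no
clique of size `r+1`, then `n ≤ r·m` and the number of intersecting pairs is at most
both the Turán number `t_r(n)` and `C(r,2)·m`. -/
theorem clique_free_intersection_bounds {X : Type*} [Fintype X] {m n r : ℕ}
    (hm : Fintype.card X = m) (A : Fin n → Set X)
    (hne : ∀ i, (A i).Nonempty)
    (hfree : ¬ ∃ s : Finset (Fin n), s.card = r + 1 ∧
      ∀ i ∈ s, ∀ j ∈ s, i ≠ j → (A i ∩ A j).Nonempty) :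
    n ≤ r * m ∧
    {p : Fin n × Fin n | p.1 < p.2 ∧ (A p.1 ∩ A p.2).Nonempty}.ncard
      ≤ (SimpleGraph.turanGraph n r).edgeSet.ncard ∧
    {p : Fin n × Fin n | p.1 < p.2 ∧ (A p.1 ∩ A p.2).Nonempty}.ncard
      ≤ Nat.choose r 2 * m := by
  classical
  subst hm
  have hA : (intersectionGraph A).CliqueFree (r + 1) := cliqueFree_intersectionGraph_iff.2 hfree
  have hpairs : {p : Fin n × Fin n | p.1 < p.2 ∧ (A p.1 ∩ A p.2).Nonempty}.ncard =
      #(intersectionGraph A).edgeFinset := by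
    rw [← Set.ncard_coe_finset, coe_edgeFinset, ← ncard_setOf_lt_adj]
    congr! 3 with p
    simp +contextual [ne_of_lt]
  refine ⟨by simpa using intersectionGraph.card_le_mul_card hne hA, ?_, ?_⟩
  · rw [hpairs, ← coe_edgeFinset, Set.ncard_coe_finset]
    exact hA.card_edgeFinset_le_card_edgeFinset_turanGraph (Fintype.card_fin n)
  · rw [hpairs]
    exact intersectionGraph.card_edgeFinset_le_choose_mul_card hA
end

section
/- Let q be a prime power, m = q^2, and r ≤ q + 1. Then there exist r·q subsets of an m-element set, each of size q, such that any two of them intersect in at most one point, every element is in exactly r of them, and their intersection graph is the complete r-partite graph with parts of size q (i.e., two sets intersect iff they lie in different parts). Consequently this graph has binom(r,2)·q^2 = binom(r,2)·m edges, matching the upper bound min{t_r(rq), binom(r,2)m}. -/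
/-!
Identify the `m`-set with the affine plane `F²` over the field `F` of order `q`. For each slope
`u ∈ F ∪ {∞}` the lines of slope `u` are the fibres of a linear form `F² → F`, and the forms of two
different slopes are jointly bijective `F² → F²`: these `q + 1` parallel classes are the rows, the
columns and `q - 1` mutually orthogonal Latin squares. Keep `r` of the classes and take their lines
as the sets: lines of one class are disjoint and have `q` points, lines of different classes meet
in exactly one point, and every point lies on exactly one line of each class.
-/

open Function Set

theorem preimage_singleton_inter_preimage_singleton {X B : Type*} (f g : X → B) (a b : B) :
    f ⁻¹' {a} ∩ g ⁻¹' {b} = Function.prod f g ⁻¹' {(a, b)} := by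
  ext x
  simp [Prod.ext_iff]

def Orthogonal {X B : Type*} (f g : X → B) : Prop :=
  Bijective (Function.prod f g)

namespace Orthogonal

variable {X B : Type*} {f g : X → B}

theorem symm (h : Orthogonal f g) : Orthogonal g f :=
  (Equiv.prodComm B B).bijective.comp h

theorem comp_equiv {X' B' : Type*} (h : Orthogonal f g) (e : X' ≃ X) (φ : B ≃ B') :
    Orthogonal (φ ∘ f ∘ e) (φ ∘ g ∘ e) :=
  ((Equiv.prodCongr φ φ).bijective.comp h).comp e.bijective

theorem ncard_inter_fiber (h : Orthogonal f g) (a b : B) :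
    (f ⁻¹' {a} ∩ g ⁻¹' {b}).ncard = 1 := by
  rw [preimage_singleton_inter_preimage_singleton,
    ncard_preimage_of_injective_subset_range h.injective (by simp [h.surjective.range_eq]),
    ncard_singleton]

theorem ncard_fiber (h : Orthogonal f g) (a : B) : (f ⁻¹' {a}).ncard = Nat.card B := by
  have : f ⁻¹' {a} = Function.prod f g ⁻¹' ({a} ×ˢ univ) := by
    ext x
    simp
  rw [this, ncard_preimage_of_injective_subset_range h.injective
    (by simp [h.surjective.range_eq]), ncard_prod, ncard_singleton, ncard_univ, one_mul]

theorem inter_fiber_nonempty (h : Orthogonal f g) (a b : B) :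
    (f ⁻¹' {a} ∩ g ⁻¹' {b}).Nonempty :=
  nonempty_of_ncard_ne_zero (by rw [h.ncard_inter_fiber]; exact one_ne_zero)

end Orthogonal

theorem ncard_setOf_apply_fst_eq_snd {κ B : Type*} (φ : κ → B) :
    {p : κ × B | φ p.1 = p.2}.ncard = Nat.card κ := by
  have : {p : κ × B | φ p.1 = p.2} = range fun i => (i, φ i) := by
    ext ⟨i, b⟩
    simp [eq_comm]
  rw [this, ncard_range_of_injective fun i j h => congrArg Prod.fst h]

theorem ncard_setOf_fst_fst_ne {κ B : Type*} [Finite κ] [Finite B] :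
    {pp : (κ × B) × (κ × B) | pp.1.1 ≠ pp.2.1}.ncard
      = 2 * ((Nat.card κ).choose 2 * Nat.card B ^ 2) := by
  classical
  have := Fintype.ofFinite κ
  have := Fintype.ofFinite B
  let e : {pp : (κ × B) × (κ × B) | pp.1.1 ≠ pp.2.1} ≃
      {ij : κ × κ // ij.1 ≠ ij.2} × (B × B) :=
    { toFun := fun pp => (⟨(pp.1.1.1, pp.1.2.1), pp.2⟩, (pp.1.1.2, pp.1.2.2))
      invFun := fun x => ⟨((x.1.1.1, x.2.1), (x.1.1.2, x.2.2)), x.1.2⟩ }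
  have hoff : Nat.card {ij : κ × κ // ij.1 ≠ ij.2} = Nat.card κ * (Nat.card κ - 1) := by
    have : Finset.univ.filter (fun ij : κ × κ => ij.1 ≠ ij.2) = Finset.univ.offDiag := by
      ext; simp
    rw [Nat.card_eq_fintype_card, Fintype.card_subtype, this, Finset.offDiag_card,
      Finset.card_univ, Nat.mul_sub_one, Nat.card_eq_fintype_card]
  rw [← Nat.card_coe_set_eq, Nat.card_congr e, Nat.card_prod, hoff, Nat.card_prod,
    Nat.choose_two_right, ← mul_assoc 2, Nat.mul_div_cancel' (Nat.even_mul_pred_self _).two_dvd,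
    sq, mul_assoc]

section AffinePlane

variable {F : Type*} [Field F]

/-- `intercept u` sends a point of `F²` to the intercept of the line of slope `u` through it
(`none` is the vertical slope), so its fibres form a parallel class of the affine plane. -/
def intercept : Option F → F × F →ₗ[F] F
  | none => LinearMap.fst F F F
  | some s => LinearMap.snd F F F - s • LinearMap.fst F F F

theorem orthogonal_of_linearMap {f g : F × F →ₗ[F] F} (h : ∀ z, f z = 0 → g z = 0 → z = 0) :
    Orthogonal f g := by
  have hinj : Injective (f.prod g) :=
    (injective_iff_map_eq_zero _).2 fun z hz => h z (congrArg Prod.fst hz) (congrArg Prod.snd hz)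
  exact ⟨hinj, LinearMap.injective_iff_surjective.1 hinj⟩

theorem orthogonal_intercept_none_some (s : F) :
    Orthogonal (intercept none) (intercept (some s)) := by
  refine orthogonal_of_linearMap fun z h₁ h₂ => ?_
  simp only [intercept, LinearMap.fst_apply, LinearMap.sub_apply, LinearMap.snd_apply,
    LinearMap.smul_apply, smul_eq_mul] at h₁ h₂
  rw [h₁, mul_zero, sub_zero] at h₂
  exact Prod.ext h₁ h₂

theorem orthogonal_intercept_some_some {s t : F} (hst : s ≠ t) :
    Orthogonal (intercept (some s)) (intercept (some t)) := by
  refine orthogonal_of_linearMap fun z h₁ h₂ => ?_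
  simp only [intercept, LinearMap.fst_apply, LinearMap.sub_apply, LinearMap.snd_apply,
    LinearMap.smul_apply, smul_eq_mul] at h₁ h₂
  have hx : z.1 = 0 := by
    have : (s - t) * z.1 = 0 := by linear_combination h₂ - h₁
    exact (mul_eq_zero.1 this).resolve_left (sub_ne_zero.2 hst)
  rw [hx, mul_zero, sub_zero] at h₁
  exact Prod.ext hx h₁

theorem orthogonal_intercept : Pairwise fun u v : Option F => Orthogonal (intercept u) (intercept v)
  | none, none, h => (h rfl).elim
  | none, some _, _ => orthogonal_intercept_none_some _
  | some _, none, _ => (orthogonal_intercept_none_some _).symm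
  | some _, some _, h => orthogonal_intercept_some_some fun hst => h (congrArg some hst)

end AffinePlane

section ParallelClasses

variable {ι X B : Type*} {π : ι → X → B}

theorem ncard_fiber_of_pairwise_orthogonal [Nontrivial ι]
    (hπ : Pairwise fun i j => Orthogonal (π i) (π j)) (i : ι) (a : B) :
    (π i ⁻¹' {a}).ncard = Nat.card B :=
  (hπ (exists_ne i).choose_spec.symm).ncard_fiber a

theorem ncard_fiber_inter_fiber_le_one (hπ : Pairwise fun i j => Orthogonal (π i) (π j))
    {i j : ι} {a b : B} (h : (i, a) ≠ (j, b)) :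
    (π i ⁻¹' {a} ∩ π j ⁻¹' {b}).ncard ≤ 1 := by
  rcases eq_or_ne i j with rfl | hij
  · have hab : a ≠ b := fun hab => h (hab ▸ rfl)
    rw [← preimage_inter, (disjoint_singleton.2 hab).inter_eq, preimage_empty, ncard_empty]
    exact zero_le_one
  · exact ((hπ hij).ncard_inter_fiber a b).le

theorem fiber_inter_fiber_nonempty_iff [Nontrivial ι]
    (hπ : Pairwise fun i j => Orthogonal (π i) (π j)) (i j : ι) (a b : B) :
    (π i ⁻¹' {a} ∩ π j ⁻¹' {b}).Nonempty ↔ i ≠ j ∨ a = b := by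
  refine ⟨?_, fun h => ?_⟩
  · rintro ⟨x, hxa, hxb⟩
    by_contra! ⟨rfl, hab⟩
    exact hab (hxa.symm.trans hxb)
  rcases eq_or_ne i j with rfl | hij
  · obtain rfl := h.resolve_left (not_not.2 rfl)
    obtain ⟨k, hk⟩ := exists_ne i
    exact ((hπ hk.symm).inter_fiber_nonempty a a).mono fun x hx => ⟨hx.1, hx.1⟩
  · exact (hπ hij).inter_fiber_nonempty a b

end ParallelClasses

/-- Latin-square construction: for a prime power `q`, `m = q²` and `r ≤ q+1`, there are
`r·q` subsets of an `m`-set, each of size `q`, pairwise intersecting in at most one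
point, with every element in exactly `r` of them, whose intersection graph is the
complete `r`-partite graph with parts of size `q`; in particular it has `C(r,2)·m`
edges (i.e. `2·C(r,2)·m` ordered intersecting pairs). -/
theorem latin_square_construction {q m r : ℕ} (hq : IsPrimePow q)
    (hm : m = q ^ 2) (hr : r ≤ q + 1)
    {X : Type*} [Fintype X] (hX : Fintype.card X = m) :
    ∃ A : Fin r × Fin q → Set X,
      (∀ p, (A p).ncard = q) ∧
      (∀ p p', p ≠ p' → (A p ∩ A p').ncard ≤ 1) ∧
      (∀ x : X, {p : Fin r × Fin q | x ∈ A p}.ncard = r) ∧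
      (∀ (i j : Fin r) (a b : Fin q),
        ((A (i, a) ∩ A (j, b)).Nonempty ↔ (i ≠ j ∨ a = b))) ∧
      {pp : (Fin r × Fin q) × (Fin r × Fin q) |
          pp.1 ≠ pp.2 ∧ (A pp.1 ∩ A pp.2).Nonempty}.ncard
        = 2 * (Nat.choose r 2 * m) := by
  obtain ⟨p, k, hp, hk, rfl⟩ := hq
  subst hm
  have : Fact p.Prime := ⟨hp.nat_prime⟩
  let F := GaloisField p k
  have : Fintype F := Fintype.ofFinite F
  have hF : Fintype.card F = p ^ k := by
    rw [← Nat.card_eq_fintype_card, GaloisField.card p k hk.ne']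
  obtain ⟨e⟩ : Nonempty (X ≃ F × F) :=
    ⟨Fintype.equivOfCardEq (by rw [hX, Fintype.card_prod, hF, sq])⟩
  obtain ⟨g⟩ : Nonempty (F ≃ Fin (p ^ k)) := ⟨Fintype.equivFinOfCardEq hF⟩
  obtain ⟨f⟩ : Nonempty (Fin r ↪ Option F) :=
    Function.Embedding.nonempty_of_card_le (by simpa [hF] using hr)
  let π : Option F → X → Fin (p ^ k) := fun u => g ∘ intercept u ∘ e
  have hπ : Pairwise fun u v => Orthogonal (π u) (π v) := fun u v huv =>
    (orthogonal_intercept huv).comp_equiv e g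
  have hiff (i j : Fin r) (a b : Fin (p ^ k)) :
      (π (f i) ⁻¹' {a} ∩ π (f j) ⁻¹' {b}).Nonempty ↔ i ≠ j ∨ a = b := by
    rw [← f.injective.ne_iff]
    exact fiber_inter_fiber_nonempty_iff hπ _ _ _ _
  refine ⟨fun p => π (f p.1) ⁻¹' {p.2}, fun p => ?_, fun p p' h => ?_, fun x => ?_, hiff, ?_⟩
  · rw [ncard_fiber_of_pairwise_orthogonal hπ, Nat.card_fin]
  · exact ncard_fiber_inter_fiber_le_one hπ (by simpa [Prod.ext_iff, f.injective.eq_iff] using h)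
  · exact (ncard_setOf_apply_fst_eq_snd fun i => π (f i) x).trans (Nat.card_fin r)
  · have hedges : {pp : (Fin r × Fin (p ^ k)) × (Fin r × Fin (p ^ k)) |
        pp.1 ≠ pp.2 ∧ (π (f pp.1.1) ⁻¹' {pp.1.2} ∩ π (f pp.2.1) ⁻¹' {pp.2.2}).Nonempty}
        = {pp | pp.1.1 ≠ pp.2.1} := by
      ext ⟨⟨i, a⟩, ⟨j, b⟩⟩
      simp only [mem_ofPred_eq, hiff, ne_eq, Prod.mk.injEq]
      tauto
    rw [hedges, ncard_setOf_fst_fst_ne, Nat.card_fin, Nat.card_fin]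
end

section
/- Every intersection graph of n subcubes of {0,1}^2 with n ≥ 2(k−1)+1 contains either a clique of size k or an independent set of size 3; together with the lower bound construction (k−1 copies each of two disjoint singleton subcubes) this shows R_2(k,3) = 2(k−1)+1 = 2k−1. -/
/-- The intersection graph of a family of subcubes contains a clique of size `k`. -/
def cubesHaveClique {d n : ℕ} (A : Fin n → (Fin d → Option Bool)) (k : ℕ) : Prop :=
  ∃ s : Finset (Fin n), s.card = k ∧
    ∀ i ∈ s, ∀ j ∈ s, i ≠ j → (cubeSet (A i) ∩ cubeSet (A j)).Nonempty

/-- The intersection graph of a family of subcubes contains an independent set of size `l`. -/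
def cubesHaveIndep {d n : ℕ} (A : Fin n → (Fin d → Option Bool)) (l : ℕ) : Prop :=
  ∃ s : Finset (Fin n), s.card = l ∧
    ∀ i ∈ s, ∀ j ∈ s, i ≠ j → cubeSet (A i) ∩ cubeSet (A j) = ∅

/-- `Rd d k l`: the least `n` such that every intersection graph of `n` subcubes of
`{0,1}^d` contains a clique of size `k` or an independent set of size `l`. -/
noncomputable def Rd (d k l : ℕ) : ℕ :=
  sInf {n : ℕ | ∀ A : Fin n → (Fin d → Option Bool),
    cubesHaveClique A k ∨ cubesHaveIndep A l}

/-!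
If no three subcubes of `{0,1}^2` are pairwise disjoint, then two points of the square meet
every subcube of the family: two distinct singleton subcubes `{p}`, `{q}` do, since a third
subcube avoiding both would give a disjoint triple; otherwise all singletons coincide with some
`{p}`, and `p` together with its antipode works, because every subcube of the square with a free
coordinate contains a point or its antipode. By pigeonhole, among `2(k-1)+1` subcubes one of the
two points then lies in `k` of them. Conversely `k-1` copies each of two disjoint singleton
subcubes contain neither a `k`-clique nor three pairwise disjoint subcubes.
-/

section Cubes

variable {d : ℕ}

theorem cubeSet_nonempty (u : Fin d → Option Bool) : (cubeSet u).Nonempty :=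
  ⟨fun i => (u i).getD false, fun i b hb => by simp [hb]⟩

theorem cubeSet_eq_singleton {u : Fin d → Option Bool} {p : Fin d → Bool}
    (h : ∀ i, u i = some (p i)) : cubeSet u = {p} := by
  ext x
  simp only [cubeSet, Set.mem_ofPred_eq, Set.mem_singleton_iff]
  constructor
  · intro hx
    funext i
    exact hx i (p i) (h i)
  · rintro rfl i b hb
    rw [h i] at hb
    exact Option.some_inj.mp hb

theorem mem_cubeSet_or_antipode_mem_of_eq_none {u : Fin 2 → Option Bool} {c : Fin 2}
    (hc : u c = none) (q : Fin 2 → Bool) :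
    q ∈ cubeSet u ∨ (fun i => !q i) ∈ cubeSet u := by
  revert u c q
  unfold cubeSet
  decide

theorem cubeSet_eq_singleton_or_mem_or_antipode_mem (u : Fin 2 → Option Bool) :
    (∃ p, cubeSet u = {p}) ∨ ∀ q, q ∈ cubeSet u ∨ (fun i => !q i) ∈ cubeSet u := by
  by_cases h : ∃ c, u c = none
  · obtain ⟨c, hc⟩ := h
    exact Or.inr (mem_cubeSet_or_antipode_mem_of_eq_none hc)
  · push Not at h
    refine Or.inl ⟨fun i => (u i).getD false, cubeSet_eq_singleton fun i => ?_⟩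
    obtain ⟨b, hb⟩ := Option.ne_none_iff_exists'.mp (h i)
    simp [hb]

end Cubes

section Families

variable {d n : ℕ} {A : Fin n → Fin d → Option Bool}

theorem cubesHaveIndep_three {i j m : Fin n}
    (hij : Disjoint (cubeSet (A i)) (cubeSet (A j)))
    (him : Disjoint (cubeSet (A i)) (cubeSet (A m)))
    (hjm : Disjoint (cubeSet (A j)) (cubeSet (A m))) :
    cubesHaveIndep A 3 := by
  have ne_of_disjoint : ∀ {a b : Fin n}, Disjoint (cubeSet (A a)) (cubeSet (A b)) → a ≠ b :=
    fun hab he => (cubeSet_nonempty _).ne_empty (disjoint_self.mp (he ▸ hab))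
  refine ⟨{i, j, m}, ?_, ?_⟩
  · rw [Finset.card_eq_three]
    exact ⟨i, j, m, ne_of_disjoint hij, ne_of_disjoint him, ne_of_disjoint hjm, rfl⟩
  · simp only [Finset.mem_insert, Finset.mem_singleton, ← Set.disjoint_iff_inter_eq_empty]
    rintro a (rfl | rfl | rfl) b (rfl | rfl | rfl) hab <;>
      first | exact absurd rfl hab | assumption | exact Disjoint.symm ‹_›

theorem cubesHaveClique_of_mem (p : Fin d → Bool) (s : Finset (Fin n))
    (hs : ∀ i ∈ s, p ∈ cubeSet (A i)) {k : ℕ} (hk : k ≤ s.card) :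
    cubesHaveClique A k := by
  obtain ⟨t, hts, htk⟩ := Finset.exists_subset_card_eq hk
  exact ⟨t, htk, fun i hi j hj _ => ⟨p, hs i (hts hi), hs j (hts hj)⟩⟩

theorem cubesHaveClique_of_forall_mem_or_mem (p q : Fin d → Bool)
    (hpq : ∀ m, p ∈ cubeSet (A m) ∨ q ∈ cubeSet (A m)) {k : ℕ} (hn : 2 * (k - 1) < n) :
    cubesHaveClique A k := by
  classical
  set sp := Finset.univ.filter fun m => p ∈ cubeSet (A m)
  set sq := Finset.univ.filter fun m => q ∈ cubeSet (A m)
  have hcard : n ≤ sp.card + sq.card :=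
    calc n = (Finset.univ : Finset (Fin n)).card := (Finset.card_fin n).symm
      _ ≤ (sp ∪ sq).card := Finset.card_le_card fun m _ => by simpa [sp, sq] using hpq m
      _ ≤ sp.card + sq.card := Finset.card_union_le _ _
  rcases le_or_gt k sp.card with hp | hp
  · exact cubesHaveClique_of_mem p sp (fun m hm => (Finset.mem_filter.mp hm).2) hp
  · exact cubesHaveClique_of_mem q sq (fun m hm => (Finset.mem_filter.mp hm).2) (by omega)

theorem not_cubesHaveIndep_of_map_eq {β : Type*} [Fintype β] (f : Fin n → β)
    (hf : ∀ i j, f i = f j → (cubeSet (A i) ∩ cubeSet (A j)).Nonempty) {l : ℕ}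
    (hl : Fintype.card β < l) : ¬cubesHaveIndep A l := by
  rintro ⟨s, hs, hindep⟩
  obtain ⟨i, hi, j, hj, hij, hfij⟩ := Finset.exists_ne_map_eq_of_card_lt_of_maps_to
    (t := Finset.univ) (by rwa [Finset.card_univ, hs]) fun i _ => Finset.mem_univ (f i)
  exact (hf i j hfij).ne_empty (hindep i hi j hj hij)

theorem not_cubesHaveClique_of_injOn {β : Type*} [Fintype β] (g : Fin n → β)
    (hg : ∀ i j, (cubeSet (A i) ∩ cubeSet (A j)).Nonempty → g i = g j → i = j) {k : ℕ}
    (hk : Fintype.card β < k) : ¬cubesHaveClique A k := by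
  rintro ⟨s, hs, hclique⟩
  have hinj : Set.InjOn g s := fun i hi j hj hgij => by
    by_contra hij
    exact hij (hg i j (hclique i hi j hj hij) hgij)
  have := Finset.card_le_card_of_injOn g (fun i _ => Finset.mem_coe.mpr (Finset.mem_univ _)) hinj
  rw [Finset.card_univ] at this
  omega

end Families

theorem exists_forall_mem_or_mem_of_not_cubesHaveIndep {n : ℕ} {A : Fin n → Fin 2 → Option Bool}
    (hA : ¬cubesHaveIndep A 3) : ∃ p q, ∀ m, p ∈ cubeSet (A m) ∨ q ∈ cubeSet (A m) := by
  by_cases hsing : ∃ i j p q, cubeSet (A i) = {p} ∧ cubeSet (A j) = {q} ∧ p ≠ q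
  · obtain ⟨i, j, p, q, hi, hj, hpq⟩ := hsing
    refine ⟨p, q, fun m => ?_⟩
    by_contra! hm
    apply hA
    refine cubesHaveIndep_three (i := i) (j := j) (m := m) ?_ ?_ ?_ <;>
      simp only [hi, hj, Set.disjoint_singleton_left, Set.mem_singleton_iff, hpq, hm,
        not_false_eq_true]
  · push Not at hsing
    obtain ⟨p, hp⟩ : ∃ p, ∀ i q, cubeSet (A i) = {q} → q = p := by
      by_cases h : ∃ i q, cubeSet (A i) = {q}
      · obtain ⟨i, p, hi⟩ := h
        exact ⟨p, fun j q hj => hsing j i q p hj hi⟩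
      · push Not at h
        exact ⟨fun _ => false, fun i q hi => absurd hi (h i q)⟩
    refine ⟨p, fun i => !p i, fun m => ?_⟩
    rcases cubeSet_eq_singleton_or_mem_or_antipode_mem (A m) with ⟨q, hq⟩ | hmem
    · left
      rw [hq, hp m q hq]
      rfl
    · exact hmem p

theorem cubesHaveClique_or_cubesHaveIndep_three {n k : ℕ} (hn : 2 * (k - 1) < n)
    (A : Fin n → Fin 2 → Option Bool) : cubesHaveClique A k ∨ cubesHaveIndep A 3 := by
  by_cases hA : cubesHaveIndep A 3
  · exact Or.inr hA
  obtain ⟨p, q, hpq⟩ := exists_forall_mem_or_mem_of_not_cubesHaveIndep hA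
  exact Or.inl (cubesHaveClique_of_forall_mem_or_mem p q hpq hn)

theorem exists_not_cubesHaveClique_not_cubesHaveIndep_three {k m : ℕ} (hk : 1 ≤ k)
    (hm : m ≤ 2 * (k - 1)) :
    ∃ A : Fin m → Fin 2 → Option Bool, ¬cubesHaveClique A k ∧ ¬cubesHaveIndep A 3 := by
  obtain ⟨e⟩ : Nonempty (Fin m ↪ Fin (k - 1) × Bool) :=
    Function.Embedding.nonempty_of_card_le (by simp; omega)
  -- `e` places `k - 1` copies each of the singleton subcubes at `(0,0)` and `(1,1)`.
  set A : Fin m → Fin 2 → Option Bool := fun i _ => some (e i).2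
  have hA : ∀ i, cubeSet (A i) = {fun _ => (e i).2} := fun i => cubeSet_eq_singleton fun _ => rfl
  refine ⟨A, not_cubesHaveClique_of_injOn (fun i => (e i).1) ?_ (by simp; omega),
    not_cubesHaveIndep_of_map_eq (fun i => (e i).2) ?_ (by simp)⟩
  · intro i j hij h1
    simp only [hA, Set.singleton_inter_nonempty, Set.mem_singleton_iff] at hij
    exact e.injective (Prod.ext h1 (congrFun hij 0))
  · intro i j h2
    simp only [hA, h2, Set.inter_self, Set.singleton_nonempty]

/-- `R_2(k,3) = 2(k-1)+1`. -/
theorem Rd_two_k_three {k : ℕ} (hk : 1 ≤ k) : Rd 2 k 3 = 2 * (k - 1) + 1 := by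
  refine IsLeast.csInf_eq ⟨cubesHaveClique_or_cubesHaveIndep_three (by omega), fun n hn => ?_⟩
  by_contra! hlt
  obtain ⟨A, hclique, hindep⟩ :=
    exists_not_cubesHaveClique_not_cubesHaveIndep_three hk (Nat.le_of_lt_succ hlt)
  exact (hn A).elim hclique hindep
end

section
/- For all d ≥ 1, k ≥ 2 and l ≥ 2, R_d(k,l) ≤ 2·d^{l-2}·k. -/
/-!
Instead of the dimension, induct on the size of a set `F` of coordinates outside of which no two
cubes of the family conflict (initially all `d` coordinates). If `|F| ≤ 1`, the cubes not fixing the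
conflicting coordinate to `true`, and those not fixing it to `false`, are two cliques covering the
family. Otherwise take two disjoint cubes `p` and `q`; they conflict at some `c ∈ F` fixed by `p`.
Intersecting the cubes that meet `p` with `p` preserves their intersection pattern and removes all
conflicts at `c`, so induction on `|F|` applies to them; an independent set among the cubes disjoint
from `p` extends by `p`, so induction on `l` applies to those. As
`m ^ (e + 1) + (m + 1) ^ e ≤ (m + 1) ^ (e + 1)`, one of the two groups is large enough.
-/

namespace Subcube

variable {α β ι : Type*}

def Consistent (a b : Option β) : Prop := ∀ x ∈ a, ∀ y ∈ b, x = y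

theorem Consistent.symm {a b : Option β} (h : Consistent a b) : Consistent b a :=
  fun x hx y hy => (h y hy x hx).symm

theorem consistent_self (a : Option β) : Consistent a a :=
  fun _ hx _ hy => Option.mem_unique hx hy

theorem consistent_or_iff {p a b : Option β} (ha : Consistent p a) (hb : Consistent p b) :
    Consistent (p.or a) (p.or b) ↔ Consistent a b := by
  cases p with
  | none => simp only [Option.none_or]
  | some z =>
    simp only [Option.some_or, consistent_self, true_iff]
    intro x hx y hy
    rw [← ha z rfl x hx, ← hb z rfl y hy]

def Compatible (u v : α → Option β) : Prop := ∀ x, Consistent (u x) (v x)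

theorem Compatible.symm {u v : α → Option β} (h : Compatible u v) : Compatible v u :=
  fun x => (h x).symm

theorem compatible_self (u : α → Option β) : Compatible u u :=
  fun x => consistent_self (u x)

def meet (u v : α → Option β) : α → Option β := fun x => (u x).or (v x)

theorem compatible_meet_iff {p u v : α → Option β} (hu : Compatible p u) (hv : Compatible p v) :
    Compatible (meet p u) (meet p v) ↔ Compatible u v :=
  forall_congr' fun x => consistent_or_iff (hu x) (hv x)

section Family

variable (A : ι → α → Option Bool)

def ConflictsWithin (F : Finset α) (S : Finset ι) : Prop :=
  ∀ i ∈ S, ∀ j ∈ S, ∀ x ∉ F, Consistent (A i x) (A j x)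

def CliqueOrIndep (S : Finset ι) (k l : ℕ) : Prop :=
  (∃ T ⊆ S, k ≤ T.card ∧ (T : Set ι).Pairwise fun i j => Compatible (A i) (A j)) ∨
    ∃ T ⊆ S, l ≤ T.card ∧ (T : Set ι).Pairwise fun i j => ¬Compatible (A i) (A j)

variable {A}

theorem ConflictsWithin.mono {F : Finset α} {S T : Finset ι} (h : ConflictsWithin A F S)
    (hTS : T ⊆ S) : ConflictsWithin A F T :=
  fun i hi j hj => h i (hTS hi) j (hTS hj)

theorem CliqueOrIndep.mono {S S' : Finset ι} {k l : ℕ} (h : CliqueOrIndep A S k l)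
    (hSS' : S ⊆ S') : CliqueOrIndep A S' k l := by
  rcases h with ⟨T, hTS, hT⟩ | ⟨T, hTS, hT⟩
  exacts [Or.inl ⟨T, hTS.trans hSS', hT⟩, Or.inr ⟨T, hTS.trans hSS', hT⟩]

theorem ConflictsWithin.meet_erase [DecidableEq α] {F : Finset α} {S : Finset ι}
    (h : ConflictsWithin A F S) {p : α → Option Bool} (hpS : ∀ j ∈ S, Compatible p (A j))
    {c : α} {b : Bool} (hc : p c = some b) :
    ConflictsWithin (fun j => meet p (A j)) (F.erase c) S := by
  intro i hi j hj x hx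
  by_cases hxc : x = c
  · subst hxc
    simp only [meet, hc, Option.some_or]
    exact consistent_self _
  · exact (consistent_or_iff (hpS i hi x) (hpS j hj x)).2
      (h i hi j hj x fun hxF => hx (Finset.mem_erase.2 ⟨hxc, hxF⟩))

theorem CliqueOrIndep.of_meet {S : Finset ι} {p : α → Option Bool} {k l : ℕ}
    (hpS : ∀ j ∈ S, Compatible p (A j)) (h : CliqueOrIndep (fun j => meet p (A j)) S k l) :
    CliqueOrIndep A S k l := by
  have hiff : ∀ i ∈ S, ∀ j ∈ S,
      Compatible (meet p (A i)) (meet p (A j)) ↔ Compatible (A i) (A j) :=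
    fun i hi j hj => compatible_meet_iff (hpS i hi) (hpS j hj)
  rcases h with ⟨T, hTS, hk, hT⟩ | ⟨T, hTS, hl, hT⟩
  · exact Or.inl ⟨T, hTS, hk, fun i hi j hj hij =>
      (hiff i (hTS hi) j (hTS hj)).1 (hT hi hj hij)⟩
  · exact Or.inr ⟨T, hTS, hl, fun i hi j hj hij =>
      mt (hiff i (hTS hi) j (hTS hj)).2 (hT hi hj hij)⟩

theorem CliqueOrIndep.insert_of_not_compatible [DecidableEq ι] {S : Finset ι} {p : ι} {k l : ℕ}
    (h : CliqueOrIndep A S k l) (hpS : ∀ j ∈ S, ¬Compatible (A p) (A j)) :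
    CliqueOrIndep A (insert p S) k (l + 1) := by
  rcases h with ⟨T, hTS, hT⟩ | ⟨T, hTS, hl, hT⟩
  · exact Or.inl ⟨T, hTS.trans (Finset.subset_insert p S), hT⟩
  have hpT : p ∉ T := fun hp => hpS p (hTS hp) (compatible_self _)
  refine Or.inr ⟨insert p T, Finset.insert_subset_insert p hTS, ?_, ?_⟩
  · rw [Finset.card_insert_of_notMem hpT]
    omega
  · rw [Finset.coe_insert, Set.pairwise_insert_of_notMem hpT]
    exact ⟨hT, fun j hj => ⟨hpS j (hTS hj), fun hjp => hpS j (hTS hj) hjp.symm⟩⟩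

theorem ConflictsWithin.exists_mem_eq_some {F : Finset α} {S : Finset ι}
    (h : ConflictsWithin A F S) {p q : ι} (hp : p ∈ S) (hq : q ∈ S)
    (hpq : ¬Compatible (A p) (A q)) : ∃ c ∈ F, ∃ b, A p c = some b := by
  obtain ⟨c, hc⟩ : ∃ c, ¬Consistent (A p c) (A q c) := by simpa [Compatible] using hpq
  obtain ⟨b, hb, -⟩ : ∃ b ∈ A p c, ∃ b' ∈ A q c, b ≠ b' := by
    simp only [Consistent] at hc
    push Not at hc
    exact hc
  exact ⟨c, by_contra fun hcF => hc (h p hp q hq c hcF), b, hb⟩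

theorem cliqueOrIndep_of_pair {S : Finset ι} {p q : ι} (hp : p ∈ S) (hq : q ∈ S) (hpq : p ≠ q)
    (hApq : ¬Compatible (A p) (A q)) (k : ℕ) {l : ℕ} (hl : l ≤ 2) : CliqueOrIndep A S k l := by
  classical
  refine Or.inr ⟨{p, q}, Finset.insert_subset hp (Finset.singleton_subset_iff.2 hq), ?_, ?_⟩
  · rwa [Finset.card_pair hpq]
  · rw [Finset.coe_pair, Set.pairwise_pair]
    exact fun _ => ⟨hApq, fun h => hApq h.symm⟩

theorem exists_clique_of_card_le_one {F : Finset α} (hF : F.card ≤ 1) {S : Finset ι}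
    (hA : ConflictsWithin A F S) {k : ℕ} (hS : 2 * k ≤ S.card) :
    ∃ T ⊆ S, k ≤ T.card ∧ (T : Set ι).Pairwise fun i j => Compatible (A i) (A j) := by
  classical
  let T (b : Bool) : Finset ι := S.filter fun i => ∀ x ∈ F, A i x ≠ some b
  have hcover : S ⊆ T true ∪ T false := by
    intro i hi
    by_contra hiT
    simp only [T, Finset.mem_union, Finset.mem_filter, hi, true_and, not_or, not_forall,
      not_not] at hiT
    obtain ⟨⟨x, hx, hxt⟩, ⟨y, hy, hyf⟩⟩ := hiT
    rw [Finset.card_le_one.1 hF x hx y hy, hyf] at hxt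
    exact Bool.false_ne_true (Option.some_injective _ hxt)
  have hclique (b : Bool) : (T b : Set ι).Pairwise fun i j => Compatible (A i) (A j) := by
    intro i hi j hj _ x
    simp only [T, Finset.mem_coe, Finset.mem_filter] at hi hj
    by_cases hx : x ∈ F
    · intro y hy y' hy'
      have hyb : y ≠ b := fun h => hi.2 x hx (h ▸ hy)
      have hyb' : y' ≠ b := fun h => hj.2 x hx (h ▸ hy')
      rw [Bool.eq_not_of_ne hyb, Bool.eq_not_of_ne hyb']
    · exact hA i hi.1 j hj.1 x hx
  have hcard := (Finset.card_le_card hcover).trans (Finset.card_union_le _ _)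
  by_cases htrue : k ≤ (T true).card
  · exact ⟨T true, Finset.filter_subset _ _, htrue, hclique true⟩
  · exact ⟨T false, Finset.filter_subset _ _, by omega, hclique false⟩

theorem pow_succ_add_pow_le (m e : ℕ) : m ^ (e + 1) + (m + 1) ^ e ≤ (m + 1) ^ (e + 1) := by
  have : m ^ e ≤ (m + 1) ^ e := Nat.pow_le_pow_left (Nat.le_succ m) e
  rw [pow_succ, pow_succ]
  nlinarith

theorem cliqueOrIndep_of_card_le_succ {m k : ℕ}
    (ih : ∀ {F : Finset α} {A : ι → α → Option Bool} {S : Finset ι} {l : ℕ}, F.card ≤ m →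
      ConflictsWithin A F S → 2 * m ^ (l - 2) * k ≤ S.card → CliqueOrIndep A S k l)
    {F : Finset α} (hF : F.card ≤ m + 1) (l : ℕ) {S : Finset ι} (hA : ConflictsWithin A F S)
    (hS : 2 * (m + 1) ^ (l - 2) * k ≤ S.card) : CliqueOrIndep A S k l := by
  classical
  induction l using Nat.strong_induction_on generalizing S with
  | _ l ihl =>
  by_cases hcomp : (S : Set ι).Pairwise fun i j => Compatible (A i) (A j)
  · have hk : k ≤ 2 * (m + 1) ^ (l - 2) * k := by
      nlinarith [Nat.one_le_pow (l - 2) (m + 1) m.succ_pos]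
    exact Or.inl ⟨S, subset_rfl, hk.trans hS, hcomp⟩
  obtain ⟨p, hp, q, hq, hpq, hApq⟩ : ∃ p ∈ S, ∃ q ∈ S, p ≠ q ∧ ¬Compatible (A p) (A q) := by
    simpa [Set.Pairwise] using hcomp
  rcases Nat.lt_or_ge l 3 with hl | hl
  · exact cliqueOrIndep_of_pair hp hq hpq hApq k (by omega)
  obtain ⟨c, hcF, b, hb⟩ := hA.exists_mem_eq_some hp hq hApq
  obtain ⟨e, rfl⟩ : ∃ e, l = e + 3 := ⟨l - 3, by omega⟩
  let B := S.filter fun j => Compatible (A p) (A j)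
  let S' := S.filter fun j => ¬Compatible (A p) (A j)
  have hsplit : B.card + S'.card = S.card := Finset.card_filter_add_card_filter_not _
  by_cases hB : 2 * m ^ (e + 1) * k ≤ B.card
  · have hpB : ∀ j ∈ B, Compatible (A p) (A j) := fun j hj => (Finset.mem_filter.1 hj).2
    have hFc : (F.erase c).card ≤ m := by
      rw [Finset.card_erase_of_mem hcF]
      omega
    have hmeet := ih (l := e + 3) hFc ((hA.mono (Finset.filter_subset _ S)).meet_erase hpB hb) hB
    exact (hmeet.of_meet hpB).mono (Finset.filter_subset _ S)
  · have hS' : 2 * (m + 1) ^ e * k ≤ S'.card := by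
      have := Nat.mul_le_mul_left (2 * k) (pow_succ_add_pow_le m e)
      simp only [show e + 3 - 2 = e + 1 by omega] at hS
      nlinarith
    have hfar := ihl (e + 2) (by omega) (hA.mono (Finset.filter_subset _ S)) (by simpa using hS')
    exact (hfar.insert_of_not_compatible fun j hj => (Finset.mem_filter.1 hj).2).mono
      (Finset.insert_subset hp (Finset.filter_subset _ S))

theorem cliqueOrIndep_of_conflictsWithin {m : ℕ} (hm : 1 ≤ m) {k l : ℕ} {F : Finset α}
    (hF : F.card ≤ m) {S : Finset ι} (hA : ConflictsWithin A F S)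
    (hS : 2 * m ^ (l - 2) * k ≤ S.card) : CliqueOrIndep A S k l := by
  induction m, hm using Nat.le_induction generalizing F A S l with
  | base => exact Or.inl (exists_clique_of_card_le_one hF hA (by simpa using hS))
  | succ m _ ih => exact cliqueOrIndep_of_card_le_succ (fun hF hA hS => ih hF hA hS) hF l hA hS

end Family

theorem inter_cubeSet_nonempty_iff {d : ℕ} (u v : Fin d → Option Bool) :
    (cubeSet u ∩ cubeSet v).Nonempty ↔ Compatible u v := by
  constructor
  · rintro ⟨x, hxu, hxv⟩ i b hb b' hb'
    rw [← hxu i b hb, ← hxv i b' hb']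
  · intro h
    refine ⟨fun i => (u i).getD ((v i).getD false), fun i b hb => by simp [hb], fun i b hb => ?_⟩
    cases hui : u i with
    | some b' => simpa [hui] using h i b' hui b hb
    | none => simp [hui, hb]

theorem cubesHaveClique_of_pairwise {d n k : ℕ} {A : Fin n → Fin d → Option Bool}
    {T : Finset (Fin n)} (hk : k ≤ T.card)
    (hT : (T : Set (Fin n)).Pairwise fun i j => Compatible (A i) (A j)) : cubesHaveClique A k := by
  obtain ⟨s, hsT, hs⟩ := Finset.exists_subset_card_eq hk
  exact ⟨s, hs, fun i hi j hj hij => (inter_cubeSet_nonempty_iff _ _).2 (hT (hsT hi) (hsT hj) hij)⟩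

theorem cubesHaveIndep_of_pairwise {d n l : ℕ} {A : Fin n → Fin d → Option Bool}
    {T : Finset (Fin n)} (hl : l ≤ T.card)
    (hT : (T : Set (Fin n)).Pairwise fun i j => ¬Compatible (A i) (A j)) : cubesHaveIndep A l := by
  obtain ⟨s, hsT, hs⟩ := Finset.exists_subset_card_eq hl
  exact ⟨s, hs, fun i hi j hj hij => Set.not_nonempty_iff_eq_empty.1
    (mt (inter_cubeSet_nonempty_iff _ _).1 (hT (hsT hi) (hsT hj) hij))⟩

end Subcube

theorem Rd_upper_bound_general {d k l : ℕ} (hd : 1 ≤ d) :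
    Rd d k l ≤ 2 * d ^ (l - 2) * k := by
  refine Nat.sInf_le fun A => ?_
  have hA : Subcube.ConflictsWithin A Finset.univ Finset.univ :=
    fun _ _ _ _ x hx => absurd (Finset.mem_univ x) hx
  rcases Subcube.cliqueOrIndep_of_conflictsWithin (k := k) (l := l) hd (by simp) hA (by simp) with
    ⟨T, -, hk, hT⟩ | ⟨T, -, hl, hT⟩
  · exact Or.inl (Subcube.cubesHaveClique_of_pairwise hk hT)
  · exact Or.inr (Subcube.cubesHaveIndep_of_pairwise hl hT)

/-- For all `d ≥ 1`, `k ≥ 2`, `l ≥ 2`, `R_d(k,l) ≤ 2·d^(l-2)·k`. -/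
theorem Rd_upper_bound {d k l : ℕ} (hd : 1 ≤ d) (hk : 2 ≤ k) (hl : 2 ≤ l) :
    Rd d k l ≤ 2 * d ^ (l - 2) * k :=
  Rd_upper_bound_general hd
end

section
/- Let V be a multiset of subcubes of {0,1}^d whose intersection graph has no independent set of size 3 and no clique of size k, and suppose some pair of subcubes in V is disjoint, with t the maximum codimension of a subcube of V that is disjoint from some other subcube of V. Then |V| ≤ 2^t·(k−1). -/
/-- The codimension of a subcube: the number of fixed coordinates. -/
def codim {d : ℕ} (u : Fin d → Option Bool) : ℕ :=
  (Finset.univ.filter (fun i : Fin d => u i ≠ none)).card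

/-! A cube of codimension greater than `t` meets every other cube, so inflating each such cube to
all of `{0,1}^d` keeps the intersection graph free of `k`-cliques. Afterwards every cube has at
least `2^(d-t)` points, and every point lies in at most `k - 1` cubes, since the cubes through a
common point pairwise intersect. Double counting gives `n * 2^(d-t) ≤ 2^d * (k - 1)`. -/

open Finset

instance {d : ℕ} (u : Fin d → Option Bool) : DecidablePred (· ∈ cubeSet u) :=
  fun x => decidable_of_iff (∀ i b, u i = some b → x i = b) Iff.rfl

lemma card_elim_univ_singleton {α : Type*} [Fintype α] (o : Option α) :
    #(o.elim univ singleton) = if o = none then Fintype.card α else 1 := by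
  cases o <;> simp

lemma card_filter_mem_cubeSet {d : ℕ} (u : Fin d → Option Bool) :
    #{x | x ∈ cubeSet u} = 2 ^ (d - codim u) := by
  have hpi : ({x | x ∈ cubeSet u} : Finset (Fin d → Bool)) =
      Fintype.piFinset fun i => (u i).elim univ singleton := by
    ext x
    simp only [mem_filter, mem_univ, true_and, Fintype.mem_piFinset]
    refine forall_congr' fun i => ?_
    cases u i <;> simp
  have hfree : #{i | u i = none} = d - codim u := by
    have := card_filter_add_card_filter_not (s := univ) (fun i : Fin d => u i = none)
    simp only [card_univ, Fintype.card_fin, ← ne_eq] at this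
    rw [codim]
    omega
  rw [hpi, Fintype.card_piFinset]
  simp only [card_elim_univ_singleton, Fintype.card_bool, prod_ite, prod_const, one_pow, mul_one,
    hfree]

lemma two_pow_sub_le_card_filter_mem_cubeSet_or {d : ℕ} (u : Fin d → Option Bool) (t : ℕ) :
    2 ^ (d - t) ≤ #{x | x ∈ cubeSet u ∨ t < codim u} := by
  by_cases hu : t < codim u
  · simpa [hu] using Nat.pow_le_pow_right two_pos (d.sub_le t)
  · calc 2 ^ (d - t) ≤ 2 ^ (d - codim u) := Nat.pow_le_pow_right two_pos (by omega)
      _ = #{x | x ∈ cubeSet u} := (card_filter_mem_cubeSet u).symm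
      _ ≤ #{x | x ∈ cubeSet u ∨ t < codim u} :=
        card_le_card (monotone_filter_right _ fun _ _ => Or.inl)

section Family

variable {d n : ℕ} {A : Fin n → (Fin d → Option Bool)}

lemma cubesHaveClique_of_le_card {k : ℕ} (s : Finset (Fin n)) (hk : k ≤ #s)
    (hs : ∀ i ∈ s, ∀ j ∈ s, i ≠ j → (cubeSet (A i) ∩ cubeSet (A j)).Nonempty) :
    cubesHaveClique A k := by
  obtain ⟨s', hs's, hcard⟩ := exists_subset_card_eq hk
  exact ⟨s', hcard, fun i hi j hj => hs i (hs's hi) j (hs's hj)⟩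

lemma inter_nonempty_of_codim_gt {t : ℕ}
    (hmax : ∀ i j : Fin n, i ≠ j → cubeSet (A i) ∩ cubeSet (A j) = ∅ → codim (A i) ≤ t)
    {i j : Fin n} (hij : i ≠ j) (h : t < codim (A i) ∨ t < codim (A j)) :
    (cubeSet (A i) ∩ cubeSet (A j)).Nonempty := by
  rw [Set.nonempty_iff_ne_empty]
  intro hempty
  rcases h with h | h
  · exact (hmax i j hij hempty).not_gt h
  · exact (hmax j i hij.symm (by rwa [Set.inter_comm])).not_gt h

lemma card_filter_mem_cubeSet_or_le {k t : ℕ} (hclique : ¬ cubesHaveClique A k)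
    (hmax : ∀ i j : Fin n, i ≠ j → cubeSet (A i) ∩ cubeSet (A j) = ∅ → codim (A i) ≤ t)
    (x : Fin d → Bool) :
    #{i | x ∈ cubeSet (A i) ∨ t < codim (A i)} ≤ k - 1 := by
  by_contra! hbig
  refine hclique (cubesHaveClique_of_le_card {i | x ∈ cubeSet (A i) ∨ t < codim (A i)}
    (by omega) fun i hi j hj hij => ?_)
  simp only [mem_filter, mem_univ, true_and] at hi hj
  rcases hi with hxi | hi
  · rcases hj with hxj | hj
    · exact ⟨x, hxi, hxj⟩
    · exact inter_nonempty_of_codim_gt hmax hij (Or.inr hj)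
  · exact inter_nonempty_of_codim_gt hmax hij (Or.inl hi)

end Family

theorem codim_count_bound_general {d n k t : ℕ} (A : Fin n → (Fin d → Option Bool))
    (hclique : ¬ cubesHaveClique A k)
    (hmax : ∀ i j : Fin n, i ≠ j → cubeSet (A i) ∩ cubeSet (A j) = ∅ →
      codim (A i) ≤ t) :
    n ≤ 2 ^ t * (k - 1) := by
  have hcount : n * 2 ^ (d - t) ≤ 2 ^ d * (k - 1) := by
    simpa using card_mul_le_card_mul (fun i x => x ∈ cubeSet (A i) ∨ t < codim (A i))
      (fun i _ => two_pow_sub_le_card_filter_mem_cubeSet_or (A i) t)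
      (fun x _ => card_filter_mem_cubeSet_or_le hclique hmax x)
  refine Nat.le_of_mul_le_mul_right (c := 2 ^ (d - t)) ?_ (by positivity)
  calc n * 2 ^ (d - t) ≤ 2 ^ d * (k - 1) := hcount
    _ ≤ 2 ^ t * 2 ^ (d - t) * (k - 1) := by
      rw [← pow_add]
      gcongr
      · exact one_le_two
      · omega
    _ = 2 ^ t * (k - 1) * 2 ^ (d - t) := by ring

/-- If a multiset of subcubes of `{0,1}^d` has no independent set of size 3 and no
clique of size `k` in its intersection graph, some pair of its subcubes is disjoint,
and `t` is the maximum codimension of a subcube disjoint from some other subcube of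
the family, then the family has at most `2^t·(k-1)` members. -/
theorem codim_count_bound {d n k t : ℕ} (A : Fin n → (Fin d → Option Bool))
    (hindep : ¬ cubesHaveIndep A 3) (hclique : ¬ cubesHaveClique A k)
    (hex : ∃ i j : Fin n, i ≠ j ∧ cubeSet (A i) ∩ cubeSet (A j) = ∅ ∧ codim (A i) = t)
    (hmax : ∀ i j : Fin n, i ≠ j → cubeSet (A i) ∩ cubeSet (A j) = ∅ →
      codim (A i) ≤ t) :
    n ≤ 2 ^ t * (k - 1) :=
  codim_count_bound_general A hclique hmax
end

section
/- Fix integers k ≥ 2 and d ≥ 1 with t = ⌊d/k⌋, and let n ≤ k·2^t. Then the Turán graph T_k(n) (the complete k-partite graph on n vertices with parts as equal as possible) is the intersection graph of n subcubes of {0,1}^d; in particular, for every r ≥ k there is a K_{r+1}-free intersection graph of n subcubes of {0,1}^d with exactly t_k(n) edges. -/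
open Function SimpleGraph

theorem cubeSet_inter_nonempty_iff {d : ℕ} {u w : Fin d → Option Bool} :
    (cubeSet u ∩ cubeSet w).Nonempty ↔ ∀ i b b', u i = some b → w i = some b' → b = b' := by
  constructor
  · rintro ⟨x, hu, hw⟩ i b b' hb hb'
    rw [← hu i b hb, hw i b' hb']
  · intro h
    refine ⟨fun i => (u i).getD ((w i).getD false), fun i b hb => by simp [hb], fun i b hb => ?_⟩
    cases hu : u i with
    | none => simp [hu, hb]
    | some b' => simpa [hu] using h i b' b hu hb

theorem Nat.eq_of_testBit_eq_of_lt_two_pow {a b t : ℕ} (ha : a < 2 ^ t) (hb : b < 2 ^ t)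
    (h : ∀ p < t, a.testBit p = b.testBit p) : a = b := by
  refine Nat.eq_of_testBit_eq fun p => ?_
  rcases lt_or_ge p t with hp | hp
  · exact h p hp
  · have h2 : 2 ^ t ≤ 2 ^ p := Nat.pow_le_pow_right two_pos hp
    rw [Nat.testBit_lt_two_pow (ha.trans_le h2), Nat.testBit_lt_two_pow (hb.trans_le h2)]

section BlockCube

variable {α β : Type*} [DecidableEq α] {d : ℕ} {e : α × β → Fin d}

/-- The subcube fixing the coordinates `e (c, ·)` to the word `x`, all other coordinates free. -/
noncomputable def blockCube (e : α × β → Fin d) (c : α) (x : β → Bool) : Fin d → Option Bool :=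
  fun i => (partialInv e i).bind fun q => if q.1 = c then some (x q.2) else none

theorem blockCube_eq_some (he : Injective e) {c : α} {x : β → Bool} {i : Fin d} {b : Bool} :
    blockCube e c x i = some b ↔ ∃ p, e (c, p) = i ∧ x p = b := by
  simp only [blockCube, Option.bind_eq_some_iff, Prod.exists, Option.ite_none_right_eq_some,
    Option.some.injEq]
  constructor
  · rintro ⟨c', p, hinv, rfl, rfl⟩
    exact ⟨p, (he.isPartialInv _ _).mp hinv, rfl⟩
  · rintro ⟨p, rfl, rfl⟩
    exact ⟨c, p, partialInv_left he _, rfl, rfl⟩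

theorem blockCube_inter_nonempty_iff (he : Injective e) {c c' : α} {x x' : β → Bool} :
    (cubeSet (blockCube e c x) ∩ cubeSet (blockCube e c' x')).Nonempty ↔ c ≠ c' ∨ x = x' := by
  simp only [cubeSet_inter_nonempty_iff, blockCube_eq_some he]
  constructor
  · intro h
    by_contra! hcx
    obtain ⟨rfl, hx⟩ := hcx
    obtain ⟨p, hp⟩ := Function.ne_iff.mp hx
    exact hp (h _ _ _ ⟨p, rfl, rfl⟩ ⟨p, rfl, rfl⟩)
  · rintro hcx i _ _ ⟨p, rfl, rfl⟩ ⟨p', hp', rfl⟩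
    obtain ⟨rfl, rfl⟩ := Prod.ext_iff.mp (he hp')
    exact congrFun (hcx.resolve_left (not_not_intro rfl)) _

end BlockCube

theorem exists_subcube_representation_turanGraph {d k t n : ℕ} (hk : 0 < k) (hkt : k * t ≤ d)
    (hn : n ≤ k * 2 ^ t) :
    ∃ A : Fin n → (Fin d → Option Bool), ∀ v w : Fin n, v ≠ w →
      ((cubeSet (A v) ∩ cubeSet (A w)).Nonempty ↔ (turanGraph n k).Adj v w) := by
  let e (q : Fin k × Fin t) : Fin d := Fin.castLE hkt (finProdFinEquiv q)
  have he : Injective e := (Fin.castLE_injective hkt).comp finProdFinEquiv.injective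
  let colour (v : Fin n) : Fin k := ⟨v % k, Nat.mod_lt _ hk⟩
  let word (v : Fin n) : Fin t → Bool := fun p => (v / k : ℕ).testBit p
  have hdiv (v : Fin n) : (v : ℕ) / k < 2 ^ t := Nat.div_lt_of_lt_mul (v.2.trans_le hn)
  refine ⟨fun v => blockCube e (colour v) (word v), fun v w hvw => ?_⟩
  rw [blockCube_inter_nonempty_iff he, turanGraph_adj]
  refine ⟨fun h hmod => hvw ?_, fun hmod => Or.inl fun h => hmod (Fin.val_eq_of_eq h)⟩
  have hword : word v = word w := h.resolve_left (not_not_intro (Fin.ext hmod))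
  have hquot : (v : ℕ) / k = w / k :=
    Nat.eq_of_testBit_eq_of_lt_two_pow (hdiv v) (hdiv w) fun p hp => congrFun hword ⟨p, hp⟩
  rw [Fin.ext_iff, ← Nat.div_add_mod (v : ℕ) k, ← Nat.div_add_mod (w : ℕ) k, hquot, hmod]

/-- For `t = ⌊d/k⌋` and `n ≤ k·2^t`, the Turán graph `T_k(n)` is the intersection
graph of `n` subcubes of `{0,1}^d`; in particular, for every `r ≥ k` this gives a
`K_{r+1}`-free intersection graph of `n` subcubes with `t_k(n)` edges. -/
theorem turan_graph_subcube_representation {d k t n : ℕ}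
    (hk : 1 ≤ k) (ht : t = d / k) (hn : n ≤ k * 2 ^ t) :
    ∃ A : Fin n → (Fin d → Option Bool),
      (∀ i j : Fin n, i ≠ j →
        ((cubeSet (A i) ∩ cubeSet (A j)).Nonempty ↔ (SimpleGraph.turanGraph n k).Adj i j)) ∧
      (∀ r : ℕ, k ≤ r →
        ¬ ∃ s : Finset (Fin n), s.card = r + 1 ∧
          ∀ i ∈ s, ∀ j ∈ s, i ≠ j → (cubeSet (A i) ∩ cubeSet (A j)).Nonempty) := by
  obtain ⟨A, hA⟩ := exists_subcube_representation_turanGraph hk (ht ▸ Nat.mul_div_le d k) hn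
  refine ⟨A, hA, fun r hr ⟨s, hcard, hs⟩ => ?_⟩
  have hclique : (turanGraph n k).IsNClique (r + 1) s :=
    ⟨fun i hi j hj hij => (hA i j hij).mp (hs i hi j hj hij), hcard⟩
  exact (turanGraph_cliqueFree hk).mono (Nat.succ_le_succ hr) s hclique
end
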